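/- Fix τ ∈ ℍ, z ∈ ℂ, and a ∈ ℂ, with z ∉ ℤ+τℤ, 2z ∉ ℤ+τℤ, and (a+1)z ∉ ℤ+τℤ. Define F₂(t) = [θ(t+z)θ'(0)/(θ(t)θ(z))]² · [θ(t−z)θ'(0)/(θ(t)θ(−z))] · [θ(−t+2z)θ(z)/(θ(−t+z)θ(2z))] · [θ(t+(a+1)z)θ(z)/(θ(t+z)θ((a+1)z))] · [θ(t−(a+1)z)θ(z)/(θ(t−z)θ((a+1)z))], defined wherever all denominators are nonzero. Then F₂ is doubly periodic with respect to the lattice ℤ+τℤ: F₂(t+1) = F₂(t) and F₂(t+τ) = F₂(t) whenever both sides are defined. -/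

import Mathlib

open Complex Topology Filter

/-- `q = e^{2πiτ}`. -/
noncomputable def jq (τ : ℂ) : ℂ := Complex.exp (2 * Real.pi * I * τ)

/-- The Jacobi theta function
`θ(t,τ) = q^{1/8} · 2 sin(πt) · ∏_{n≥1}(1−qⁿ) · ∏_{n≥1}(1−qⁿe^{2πit})(1−qⁿe^{−2πit})`,
where `q^{1/8} = e^{πiτ/4}`. -/
noncomputable def jTheta (t τ : ℂ) : ℂ :=
  Complex.exp (Real.pi * I * τ / 4) * (2 * Complex.sin (Real.pi * t)) *
    (∏' n : ℕ, (1 - jq τ ^ (n + 1))) *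
    (∏' n : ℕ, (1 - jq τ ^ (n + 1) * Complex.exp (2 * Real.pi * I * t)) *
      (1 - jq τ ^ (n + 1) * Complex.exp (-(2 * Real.pi * I * t))))

/-- `θ(t)` with `τ` fixed. -/
noncomputable def th (τ t : ℂ) : ℂ := jTheta t τ

/-- `θ'(0)`, the derivative of `θ(·,τ)` at `t = 0`. -/
noncomputable def thd (τ : ℂ) : ℂ := deriv (fun t => jTheta t τ) 0

/-- Membership in the lattice `ℤ + τℤ`. -/
def inLat (τ t : ℂ) : Prop := ∃ m n : ℤ, t = (m : ℂ) + (n : ℂ) * τ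

/-- The function `F₂` arising in Case 2 of the proof of birational invariance:
`F₂(t) = [θ(t+z)θ'(0)/(θ(t)θ(z))]²·[θ(t−z)θ'(0)/(θ(t)θ(−z))]·
[θ(−t+2z)θ(z)/(θ(−t+z)θ(2z))]·[θ(t+(a+1)z)θ(z)/(θ(t+z)θ((a+1)z))]·
[θ(t−(a+1)z)θ(z)/(θ(t−z)θ((a+1)z))]`. -/
noncomputable def F₂ (τ z a t : ℂ) : ℂ :=
  (th τ (t + z) * thd τ / (th τ t * th τ z)) ^ 2 *
  (th τ (t - z) * thd τ / (th τ t * th τ (-z))) *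
  (th τ (-t + 2 * z) * th τ z / (th τ (-t + z) * th τ (2 * z))) *
  (th τ (t + (a + 1) * z) * th τ z / (th τ (t + z) * th τ ((a + 1) * z))) *
  (th τ (t - (a + 1) * z) * th τ z / (th τ (t - z) * th τ ((a + 1) * z)))


/-!
`θ(t+1) = -θ(t)`, and shifting the index of the product gives `θ(t+τ) = m(t) θ(t)` with
`m(t) = -e^{-πiτ-2πit}`. Every factor of `F₂` is a quotient `θ(s)X/(θ(r)Y)`, which the
shift by `τ` multiplies by `m(s)/m(r) = e^{2πi(r-s)}`; summed over the factors of `F₂`,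
the exponents `r - s` cancel.
-/

open Real

lemma multipliable_one_sub_pow_mul {q : ℂ} (hq : ‖q‖ < 1) (k : ℕ) (u : ℂ) :
    Multipliable fun n : ℕ => 1 - q ^ (n + k) * u := by
  have hs : Summable fun n : ℕ => -(q ^ k * u * q ^ n) :=
    ((summable_geometric_of_norm_lt_one hq).mul_left (q ^ k * u)).neg
  refine (Complex.multipliable_one_add_of_summable hs).congr fun n => ?_
  ring

noncomputable def thetaProd (q u v : ℂ) : ℂ :=
  ∏' n : ℕ, (1 - q ^ (n + 1) * u) * (1 - q ^ (n + 1) * v)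

lemma thetaProd_eq {q : ℂ} (hq : ‖q‖ < 1) (u v : ℂ) :
    thetaProd q u v =
      (1 - q * u) *
        ((∏' n : ℕ, (1 - q ^ (n + 2) * u)) * ∏' n : ℕ, (1 - q ^ (n + 1) * v)) := by
  have hm := multipliable_one_sub_pow_mul hq
  rw [thetaProd, (hm 1 u).tprod_mul (hm 1 v),
    tprod_eq_zero_mul' (f := fun n : ℕ => 1 - q ^ (n + 1) * u) (hm 2 u)]
  ring_nf

lemma thetaProd_mul_inv {q : ℂ} (hq : ‖q‖ < 1) (hq0 : q ≠ 0) (u v : ℂ) :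
    thetaProd q (q * u) (q⁻¹ * v) =
      (1 - v) * ((∏' n : ℕ, (1 - q ^ (n + 2) * u)) * ∏' n : ℕ, (1 - q ^ (n + 1) * v)) := by
  have hfactor (n : ℕ) : (1 - q ^ (n + 1) * (q * u)) * (1 - q ^ (n + 1) * (q⁻¹ * v)) =
      (1 - q ^ (n + 2) * u) * (1 - q ^ (n + 0) * v) := by
    field_simp
    ring
  have hm := multipliable_one_sub_pow_mul hq
  rw [thetaProd, tprod_congr hfactor, (hm 2 u).tprod_mul (hm 0 v),
    tprod_eq_zero_mul' (f := fun n : ℕ => 1 - q ^ (n + 0) * v) (hm 1 v)]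
  ring_nf

lemma norm_jq_lt_one {τ : ℂ} (hτ : 0 < τ.im) : ‖jq τ‖ < 1 := by
  have hre : (2 * (π : ℂ) * I * τ).re = -(2 * π * τ.im) := by
    simp [Complex.mul_re, Complex.mul_im]
  rw [jq, Complex.norm_exp, hre, Real.exp_lt_one_iff]
  nlinarith [Real.pi_pos]

lemma jTheta_eq_thetaProd (t τ : ℂ) :
    jTheta t τ = cexp (π * I * τ / 4) * (∏' n : ℕ, (1 - jq τ ^ (n + 1))) *
      (2 * Complex.sin (π * t) *
        thetaProd (jq τ) (cexp (2 * π * I * t)) (cexp (-(2 * π * I * t)))) := by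
  rw [jTheta, thetaProd]
  ring

lemma two_sin_pi_mul (x : ℂ) :
    2 * Complex.sin (π * x) = ((cexp (π * I * x))⁻¹ - cexp (π * I * x)) * I := by
  rw [Complex.sin, ← Complex.exp_neg]
  ring_nf

lemma th_add_one (τ s : ℂ) : th τ (s + 1) = -th τ s := by
  have hu : cexp (2 * π * I * (s + 1)) = cexp (2 * π * I * s) := by
    rw [mul_add, mul_one]; exact Complex.exp_periodic _
  have hv : cexp (-(2 * π * I * (s + 1))) = cexp (-(2 * π * I * s)) := by
    rw [mul_add, mul_one, neg_add']; exact Complex.exp_periodic.sub_eq _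
  have hsin : Complex.sin (π * (s + 1)) = -Complex.sin (π * s) := by
    rw [mul_add, mul_one, Complex.sin_add_pi]
  rw [th, th, jTheta_eq_thetaProd, jTheta_eq_thetaProd, hu, hv, hsin]
  ring

noncomputable def thetaMultiplier (τ s : ℂ) : ℂ := -cexp (-(π * I * τ) - 2 * π * I * s)

lemma thetaMultiplier_ne_zero (τ s : ℂ) : thetaMultiplier τ s ≠ 0 :=
  neg_ne_zero.2 (Complex.exp_ne_zero _)

lemma thetaMultiplier_div (τ s r : ℂ) :
    thetaMultiplier τ s / thetaMultiplier τ r = cexp (2 * π * I * (r - s)) := by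
  rw [thetaMultiplier, thetaMultiplier, neg_div_neg_eq, ← Complex.exp_sub]
  ring_nf

lemma th_add_tau {τ : ℂ} (hτ : 0 < τ.im) (s : ℂ) :
    th τ (s + τ) = thetaMultiplier τ s * th τ s := by
  set q := jq τ
  set p := cexp (π * I * τ)
  set w := cexp (π * I * s)
  have hp : p ≠ 0 := Complex.exp_ne_zero _
  have hw : w ≠ 0 := Complex.exp_ne_zero _
  have hq : q = p ^ 2 := by rw [← Complex.exp_nat_mul]; simp only [q, jq]; ring_nf
  have hu : cexp (2 * π * I * s) = w ^ 2 := by rw [← Complex.exp_nat_mul]; ring_nf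
  have hv : cexp (-(2 * π * I * s)) = (w ^ 2)⁻¹ := by rw [Complex.exp_neg, hu]
  have hu' : cexp (2 * π * I * (s + τ)) = q * w ^ 2 := by
    rw [hq, ← hu, ← Complex.exp_nat_mul, ← Complex.exp_add]; ring_nf
  have hv' : cexp (-(2 * π * I * (s + τ))) = q⁻¹ * (w ^ 2)⁻¹ := by
    rw [Complex.exp_neg, hu', mul_inv]
  have hm : thetaMultiplier τ s = -(p * w ^ 2)⁻¹ := by
    rw [thetaMultiplier, sub_eq_add_neg, Complex.exp_add, Complex.exp_neg, Complex.exp_neg, hu,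
      mul_inv]
  have hsin : 2 * Complex.sin (π * (s + τ)) = ((p * w)⁻¹ - p * w) * I := by
    rw [two_sin_pi_mul, mul_add, Complex.exp_add, mul_comm p w]
  -- the product trades its factor `1 - q w²` for `1 - w⁻²`; the sine absorbs the difference
  have hscalar : 2 * Complex.sin (π * (s + τ)) * (1 - (w ^ 2)⁻¹) =
      thetaMultiplier τ s * (2 * Complex.sin (π * s) * (1 - q * w ^ 2)) := by
    have hsin₀ : 2 * Complex.sin (π * s) = (w⁻¹ - w) * I := two_sin_pi_mul s
    rw [hsin, hsin₀, hm, hq]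
    field_simp
    ring
  have hq1 := norm_jq_lt_one hτ
  rw [th, th, jTheta_eq_thetaProd, jTheta_eq_thetaProd, hu, hv, hu', hv',
    thetaProd_mul_inv hq1 (Complex.exp_ne_zero _), thetaProd_eq hq1, ← mul_assoc _ (1 - _),
    hscalar]
  ring

section QuasiPeriodic

variable {K L : Type*} [AddGroup K] [Field L] {f m : K → L} {w : K}

lemma quasiPeriodic_quot_add (hf : ∀ s, f (s + w) = m s * f s) (s r : K) (X Y : L) :
    f (s + w) * X / (f (r + w) * Y) = m s / m r * (f s * X / (f r * Y)) := by
  rw [hf, hf, mul_assoc, mul_assoc, mul_div_mul_comm]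

lemma quasiPeriodic_quot_sub (hf : ∀ s, f (s + w) = m s * f s) (hm : ∀ s, m s ≠ 0)
    (s r : K) (X Y : L) :
    f (s - w) * X / (f (r - w) * Y) = m (r - w) / m (s - w) * (f s * X / (f r * Y)) := by
  have h := quasiPeriodic_quot_add hf (s - w) (r - w) X Y
  rw [sub_add_cancel, sub_add_cancel] at h
  rw [h, ← mul_assoc, div_mul_div_cancel₀ (hm _), div_self (hm _), one_mul]

end QuasiPeriodic

lemma F₂_add_of_quasiPeriodic {τ w : ℂ} {m : ℂ → ℂ}
    (hf : ∀ s, th τ (s + w) = m s * th τ s) (hm : ∀ s, m s ≠ 0) (z a t : ℂ) :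
    F₂ τ z a (t + w) =
      (m (t + z) / m t) ^ 2 * (m (t - z) / m t) * (m (-t + z - w) / m (-t + 2 * z - w)) *
        (m (t + (a + 1) * z) / m (t + z)) * (m (t - (a + 1) * z) / m (t - z)) * F₂ τ z a t := by
  have hneg (c : ℂ) : -(t + w) + c = -t + c - w := by ring
  rw [F₂, add_right_comm t w, add_sub_right_comm t w, hneg, hneg, add_right_comm t w,
    add_sub_right_comm t w, quasiPeriodic_quot_add hf, quasiPeriodic_quot_add hf,
    quasiPeriodic_quot_sub hf hm, quasiPeriodic_quot_add hf, quasiPeriodic_quot_add hf, F₂]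
  ring

lemma thetaMultiplier_F₂_factor_eq_one (τ z a t : ℂ) :
    (thetaMultiplier τ (t + z) / thetaMultiplier τ t) ^ 2 *
        (thetaMultiplier τ (t - z) / thetaMultiplier τ t) *
        (thetaMultiplier τ (-t + z - τ) / thetaMultiplier τ (-t + 2 * z - τ)) *
        (thetaMultiplier τ (t + (a + 1) * z) / thetaMultiplier τ (t + z)) *
        (thetaMultiplier τ (t - (a + 1) * z) / thetaMultiplier τ (t - z)) = 1 := by
  simp only [thetaMultiplier_div, sq, ← Complex.exp_add]
  rw [← Complex.exp_zero]
  congr 1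
  ring

theorem F₂_doubly_periodic_general (τ z a : ℂ) (hτ : 0 < τ.im) (t : ℂ) :
    F₂ τ z a (t + 1) = F₂ τ z a t ∧ F₂ τ z a (t + τ) = F₂ τ z a t := by
  constructor
  · rw [F₂_add_of_quasiPeriodic (fun s => (th_add_one τ s).trans (neg_one_mul _).symm)
      (fun _ => by norm_num)]
    norm_num
  · rw [F₂_add_of_quasiPeriodic (th_add_tau hτ) (thetaMultiplier_ne_zero τ),
      thetaMultiplier_F₂_factor_eq_one, one_mul]

/-- `F₂` is doubly periodic with respect to the lattice `ℤ + τℤ`, wherever defined. -/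
theorem F₂_doubly_periodic (τ z a : ℂ) (hτ : 0 < τ.im)
    (hz : ¬ inLat τ z) (h2z : ¬ inLat τ (2 * z)) (haz : ¬ inLat τ ((a + 1) * z))
    (t : ℂ) (ht : ¬ inLat τ t) (htpz : ¬ inLat τ (t + z)) (htmz : ¬ inLat τ (t - z)) :
    F₂ τ z a (t + 1) = F₂ τ z a t ∧ F₂ τ z a (t + τ) = F₂ τ z a t :=
  F₂_doubly_periodic_general τ z a hτ t
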